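/- The surface X ⊂ P² × P¹ over ℝ defined by s²(x₀²+x₁²+x₂²) + t²(−a₀x₀² − a₁x₁² − a₂x₂²) = 0, with a₀ > a₁ > 0 > a₂ distinct reals, is smooth, and the second projection f : X → P¹ has singular fibers exactly over the six points (s:t) = (±√a₀ : 1), (±√a₁ : 1), (±√a₂ : 1) over ℂ (the fiber over (s:t) is singular iff the conic s²f − t²g is a singular conic, i.e., iff det(s²·diag(1,1,1) − t²·diag(a₀,a₁,a₂)) = 0). -/
import Mathlib

lemma conic_key (A B C x y z s t : ℂ) (ht : t ≠ 0) (hA : A ≠ 0)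
    (hAB : A ≠ B) (hAC : A ≠ C) (hx : x ≠ 0)
    (h0 : x * (s ^ 2 - t ^ 2 * A) = 0)
    (h1 : y * (s ^ 2 - t ^ 2 * B) = 0)
    (h2 : z * (s ^ 2 - t ^ 2 * C) = 0)
    (hs : s * (x ^ 2 + y ^ 2 + z ^ 2) = 0) : False := by
  have ht2 : t ^ 2 ≠ 0 := pow_ne_zero _ ht
  have hbA : s ^ 2 - t ^ 2 * A = 0 := (mul_eq_zero.mp h0).resolve_left hx
  have hbB : s ^ 2 - t ^ 2 * B ≠ 0 := by
    intro h
    have h' : t ^ 2 * (A - B) = 0 := by linear_combination h - hbA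
    rcases mul_eq_zero.mp h' with h'' | h''
    · exact ht2 h''
    · exact hAB (sub_eq_zero.mp h'')
  have hbC : s ^ 2 - t ^ 2 * C ≠ 0 := by
    intro h
    have h' : t ^ 2 * (A - C) = 0 := by linear_combination h - hbA
    rcases mul_eq_zero.mp h' with h'' | h''
    · exact ht2 h''
    · exact hAC (sub_eq_zero.mp h'')
  have hy : y = 0 := (mul_eq_zero.mp h1).resolve_right hbB
  have hz : z = 0 := (mul_eq_zero.mp h2).resolve_right hbC
  have hs0 : s = 0 := by
    rcases mul_eq_zero.mp hs with h | h
    · exact h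
    · exfalso
      apply pow_ne_zero 2 hx
      have hx2 : x ^ 2 = x ^ 2 + y ^ 2 + z ^ 2 := by rw [hy, hz]; ring
      rw [hx2, h]
  apply hA
  have hTA : t ^ 2 * A = 0 := by rw [hs0] at hbA; linear_combination -hbA
  exact (mul_eq_zero.mp hTA).resolve_left ht2

/-- The surface `X ⊂ ℙ² × ℙ¹` defined by `s²(x₀²+x₁²+x₂²) + t²(−a₀x₀²−a₁x₁²−a₂x₂²) = 0`
with `a₀ > a₁ > 0 > a₂` is smooth, and the fiber of the projection to `ℙ¹` over `(s:t)`
is singular iff `det(s²·I − t²·diag(a₀,a₁,a₂)) = (s²−t²a₀)(s²−t²a₁)(s²−t²a₂) = 0`,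
i.e., exactly over the six points `(±√a₀ : 1), (±√a₁ : 1), (±√a₂ : 1)` over `ℂ`. -/
theorem conic_bundle_smooth_and_singular_fibers (a₀ a₁ a₂ : ℝ)
    (h01 : a₁ < a₀) (h1pos : 0 < a₁) (h2neg : a₂ < 0) :
    (∀ x₀ x₁ x₂ s t : ℂ, (x₀, x₁, x₂) ≠ (0, 0, 0) → (s, t) ≠ (0, 0) →
      s ^ 2 * (x₀ ^ 2 + x₁ ^ 2 + x₂ ^ 2) +
        t ^ 2 * (-(a₀ : ℂ) * x₀ ^ 2 - (a₁ : ℂ) * x₁ ^ 2 - (a₂ : ℂ) * x₂ ^ 2) = 0 →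
      ¬ (x₀ * (s ^ 2 - t ^ 2 * (a₀ : ℂ)) = 0 ∧
         x₁ * (s ^ 2 - t ^ 2 * (a₁ : ℂ)) = 0 ∧
         x₂ * (s ^ 2 - t ^ 2 * (a₂ : ℂ)) = 0 ∧
         s * (x₀ ^ 2 + x₁ ^ 2 + x₂ ^ 2) = 0 ∧
         t * ((a₀ : ℂ) * x₀ ^ 2 + (a₁ : ℂ) * x₁ ^ 2 + (a₂ : ℂ) * x₂ ^ 2) = 0)) ∧
    (∀ s t : ℂ, (s, t) ≠ (0, 0) →
      ((∃ x₀ x₁ x₂ : ℂ, (x₀, x₁, x₂) ≠ (0, 0, 0) ∧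
          s ^ 2 * (x₀ ^ 2 + x₁ ^ 2 + x₂ ^ 2) +
            t ^ 2 * (-(a₀ : ℂ) * x₀ ^ 2 - (a₁ : ℂ) * x₁ ^ 2 - (a₂ : ℂ) * x₂ ^ 2) = 0 ∧
          x₀ * (s ^ 2 - t ^ 2 * (a₀ : ℂ)) = 0 ∧
          x₁ * (s ^ 2 - t ^ 2 * (a₁ : ℂ)) = 0 ∧
          x₂ * (s ^ 2 - t ^ 2 * (a₂ : ℂ)) = 0) ↔
        (s ^ 2 - t ^ 2 * (a₀ : ℂ)) * (s ^ 2 - t ^ 2 * (a₁ : ℂ)) *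
          (s ^ 2 - t ^ 2 * (a₂ : ℂ)) = 0)) := by
  have hA0 : (a₀ : ℂ) ≠ 0 := by exact_mod_cast (by linarith : a₀ ≠ 0)
  have hA1 : (a₁ : ℂ) ≠ 0 := by exact_mod_cast (by linarith : a₁ ≠ 0)
  have hA2 : (a₂ : ℂ) ≠ 0 := by exact_mod_cast (by linarith : a₂ ≠ 0)
  have h01' : (a₀ : ℂ) ≠ (a₁ : ℂ) := by exact_mod_cast (by linarith : a₀ ≠ a₁)
  have h02' : (a₀ : ℂ) ≠ (a₂ : ℂ) := by exact_mod_cast (by linarith : a₀ ≠ a₂)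
  have h12' : (a₁ : ℂ) ≠ (a₂ : ℂ) := by exact_mod_cast (by linarith : a₁ ≠ a₂)
  constructor
  · intro x₀ x₁ x₂ s t hx hst heq hbad
    obtain ⟨h0, h1, h2, hs, ht⟩ := hbad
    by_cases htz : t = 0
    · -- then s ≠ 0 and all xᵢ = 0
      have hsnz : s ≠ 0 := by
        intro hsz; exact hst (by rw [hsz, htz])
      have hs2 : s ^ 2 ≠ 0 := pow_ne_zero _ hsnz
      have e0 : x₀ = 0 := by
        have : s ^ 2 - t ^ 2 * (a₀ : ℂ) = s ^ 2 := by rw [htz]; ring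
        rw [this] at h0
        exact (mul_eq_zero.mp h0).resolve_right hs2
      have e1 : x₁ = 0 := by
        have : s ^ 2 - t ^ 2 * (a₁ : ℂ) = s ^ 2 := by rw [htz]; ring
        rw [this] at h1
        exact (mul_eq_zero.mp h1).resolve_right hs2
      have e2 : x₂ = 0 := by
        have : s ^ 2 - t ^ 2 * (a₂ : ℂ) = s ^ 2 := by rw [htz]; ring
        rw [this] at h2
        exact (mul_eq_zero.mp h2).resolve_right hs2
      exact hx (by rw [e0, e1, e2])
    · -- some xᵢ ≠ 0
      by_cases e0 : x₀ = 0
      · by_cases e1 : x₁ = 0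
        · by_cases e2 : x₂ = 0
          · exact hx (by rw [e0, e1, e2])
          · exact conic_key (a₂ : ℂ) (a₀ : ℂ) (a₁ : ℂ) x₂ x₀ x₁ s t htz hA2
              h02'.symm h12'.symm e2 h2 h0 h1 (by linear_combination hs)
        · exact conic_key (a₁ : ℂ) (a₀ : ℂ) (a₂ : ℂ) x₁ x₀ x₂ s t htz hA1
            h01'.symm h12' e1 h1 h0 h2 (by linear_combination hs)
      · exact conic_key (a₀ : ℂ) (a₁ : ℂ) (a₂ : ℂ) x₀ x₁ x₂ s t htz hA0
          h01' h02' e0 h0 h1 h2 hs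
  · intro s t _hst
    constructor
    · rintro ⟨x₀, x₁, x₂, hx, _heq, h0, h1, h2⟩
      by_cases e0 : x₀ = 0
      · by_cases e1 : x₁ = 0
        · by_cases e2 : x₂ = 0
          · exact absurd (by rw [e0, e1, e2]) hx
          · have : s ^ 2 - t ^ 2 * (a₂ : ℂ) = 0 :=
              (mul_eq_zero.mp h2).resolve_left e2
            rw [this]; ring
        · have : s ^ 2 - t ^ 2 * (a₁ : ℂ) = 0 :=
            (mul_eq_zero.mp h1).resolve_left e1
          rw [this]; ring
      · have : s ^ 2 - t ^ 2 * (a₀ : ℂ) = 0 :=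
          (mul_eq_zero.mp h0).resolve_left e0
        rw [this]; ring
    · intro h
      rcases mul_eq_zero.mp h with h' | hb2
      · rcases mul_eq_zero.mp h' with hb0 | hb1
        · exact ⟨1, 0, 0, by simp, by linear_combination hb0,
            by linear_combination hb0, by ring, by ring⟩
        · exact ⟨0, 1, 0, by simp, by linear_combination hb1,
            by ring, by linear_combination hb1, by ring⟩
      · exact ⟨0, 0, 1, by simp, by linear_combination hb2,
          by ring, by ring, by linear_combination hb2⟩
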